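/- arXiv:1509.03332 — 3 statements merged into one kernel-verified Lean document; each statement's English description precedes it below -/
import Mathlib

section
/- Let k, l, m be positive integers, let f assign a real number f(i,j) to each pair 1 ≤ i < j ≤ m, and suppose f is (k+2, l+2)-free. Then for every pair 1 ≤ i < j ≤ m there exist x' ∈ {1,…,k} and y' ∈ {1,…,l} such that: (1) there is no (x'+1)-cup with respect to f whose first two elements are (j, a) with f(j,a) ≥ f(i,j); (2) there is no (y'+1)-cap whose first two elements are (j, b) with f(j,b) ≤ f(i,j); (3) there exists an (x'+1)-cup whose first two elements are (i, a) with f(i,a) ≥ f(i,j); and (4) there exists a (y'+1)-cap whose first two elements are (i, b) with f(i,b) ≤ f(i,j). (In the notation of the paper: γ^j(x') < f(i,j) < δ^j(y') and γ^i(x') ≥ f(i,j) ≥ δ^i(y').) -/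
/-- A `t`-cup with respect to `f` on indices `{1, …, m}`: a strictly increasing
sequence `q 0 < q 1 < ⋯ < q (t-1)` of indices, with non-decreasing values of `f`
on consecutive pairs. -/
def IsCup (m : ℕ) (f : ℕ → ℕ → ℝ) (t : ℕ) (q : ℕ → ℕ) : Prop :=
  (∀ i, i < t → 1 ≤ q i ∧ q i ≤ m) ∧
  (∀ i, i + 1 < t → q i < q (i + 1)) ∧
  (∀ i, i + 2 < t → f (q i) (q (i + 1)) ≤ f (q (i + 1)) (q (i + 2)))

/-- A `t`-cap with respect to `f` on indices `{1, …, m}`: a strictly increasing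
sequence of indices with non-increasing values of `f` on consecutive pairs. -/
def IsCap (m : ℕ) (f : ℕ → ℕ → ℝ) (t : ℕ) (q : ℕ → ℕ) : Prop :=
  (∀ i, i < t → 1 ≤ q i ∧ q i ≤ m) ∧
  (∀ i, i + 1 < t → q i < q (i + 1)) ∧
  (∀ i, i + 2 < t → f (q (i + 1)) (q (i + 2)) ≤ f (q i) (q (i + 1)))

/-- `f` is `(k, l)`-free: there is no `k`-cup and no `l`-cap with respect to `f`. -/
def IsFree (m : ℕ) (f : ℕ → ℕ → ℝ) (k l : ℕ) : Prop :=
  (¬ ∃ q, IsCup m f k q) ∧ (¬ ∃ q, IsCap m f l q)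

namespace IsCup

variable {m t : ℕ} {f : ℕ → ℕ → ℝ} {q : ℕ → ℕ}

theorem cons {i : ℕ} (hq : IsCup m f (t + 1) q) (hi : 1 ≤ i) (hiq : i < q 0)
    (hf : f i (q 0) ≤ f (q 0) (q 1)) :
    IsCup m f (t + 2) (fun | 0 => i | n + 1 => q n) := by
  obtain ⟨hbound, hlt, hmono⟩ := hq
  refine ⟨?_, ?_, ?_⟩ <;> rintro (_ | n) hn
  · exact ⟨hi, hiq.le.trans (hbound 0 t.succ_pos).2⟩
  · exact hbound n (by omega)
  · exact hiq
  · exact hlt n (by omega)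
  · exact hf
  · exact hmono n (by omega)

end IsCup

theorem isCup_two {m : ℕ} (f : ℕ → ℕ → ℝ) {i j : ℕ} (hi : 1 ≤ i) (hij : i < j) (hj : j ≤ m) :
    IsCup m f 2 (fun | 0 => i | _ + 1 => j) := by
  refine ⟨?_, ?_, ?_⟩ <;> rintro (_ | n) hn
  · exact ⟨hi, hij.le.trans hj⟩
  · exact ⟨hi.trans hij.le, hj⟩
  · exact hij
  all_goals omega

theorem isCap_iff_isCup_neg {m t : ℕ} {f : ℕ → ℕ → ℝ} {q : ℕ → ℕ} :
    IsCap m f t q ↔ IsCup m (fun a b => -f a b) t q := by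
  simp only [IsCap, IsCup, neg_le_neg_iff]

/-- With `x' - 1` the largest `t ≤ k` such that some `(t+1)`-cup leaves `j` with a step of
value `≥ f i j`, prepending `i` to that cup (or taking the pair `(i, j)` when `t = 0`) gives
the cup from `i`; `t = k` is impossible, as prepending `i` would then give a `(k+2)`-cup. -/
theorem exists_cup_threshold {k m : ℕ} {f : ℕ → ℕ → ℝ} (hk : 1 ≤ k)
    (hf : ¬ ∃ q, IsCup m f (k + 2) q) {i j : ℕ} (hi : 1 ≤ i) (hij : i < j) (hj : j ≤ m) :
    ∃ x' ∈ Finset.Icc 1 k,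
      (¬ ∃ q, IsCup m f (x' + 1) q ∧ q 0 = j ∧ f i j ≤ f j (q 1)) ∧
      (∃ q, IsCup m f (x' + 1) q ∧ q 0 = i ∧ f i j ≤ f i (q 1)) := by
  classical
  set P : ℕ → Prop := fun t => ∃ q, IsCup m f (t + 1) q ∧ q 0 = j ∧ f i j ≤ f j (q 1)
  set X := Nat.findGreatest P k with hX
  have prepend : ∀ t, P t → ∃ q, IsCup m f (t + 2) q ∧ q 0 = i ∧ f i j ≤ f i (q 1) := by
    rintro t ⟨q, hq, rfl, hfq⟩
    exact ⟨_, hq.cons hi hij hfq, rfl, le_rfl⟩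
  have hXk : X < k := by
    refine lt_of_le_of_ne (Nat.findGreatest_le k) fun hXk => hf ?_
    obtain ⟨q, hq, -⟩ := prepend k (hXk ▸ Nat.findGreatest_of_ne_zero hX.symm (by omega))
    exact ⟨q, hq⟩
  refine ⟨X + 1, Finset.mem_Icc.2 ⟨X.succ_pos, hXk⟩,
    Nat.findGreatest_is_greatest X.lt_succ_self hXk, ?_⟩
  rcases Nat.eq_zero_or_pos X with hX0 | hX0
  · rw [hX0]
    exact ⟨_, isCup_two f hi hij hj, rfl, le_rfl⟩
  · exact prepend X (Nat.findGreatest_of_ne_zero hX.symm hX0.ne')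

theorem exists_cap_threshold {l m : ℕ} {f : ℕ → ℕ → ℝ} (hl : 1 ≤ l)
    (hf : ¬ ∃ q, IsCap m f (l + 2) q) {i j : ℕ} (hi : 1 ≤ i) (hij : i < j) (hj : j ≤ m) :
    ∃ y' ∈ Finset.Icc 1 l,
      (¬ ∃ q, IsCap m f (y' + 1) q ∧ q 0 = j ∧ f j (q 1) ≤ f i j) ∧
      (∃ q, IsCap m f (y' + 1) q ∧ q 0 = i ∧ f i (q 1) ≤ f i j) := by
  simp only [isCap_iff_isCup_neg] at hf ⊢
  simpa only [neg_le_neg_iff] using exists_cup_threshold hl hf hi hij hj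

theorem gamma_delta_lemma_general (k l m : ℕ) (hk : 1 ≤ k) (hl : 1 ≤ l)
    (f : ℕ → ℕ → ℝ) (hf : IsFree m f (k + 2) (l + 2)) :
    ∀ i j : ℕ, 1 ≤ i → i < j → j ≤ m →
      ∃ x' ∈ Finset.Icc 1 k, ∃ y' ∈ Finset.Icc 1 l,
        -- (1) no (x'+1)-cup starts with a pair (j, a) with f(j,a) ≥ f(i,j)
        (¬ ∃ q, IsCup m f (x' + 1) q ∧ q 0 = j ∧ f i j ≤ f j (q 1)) ∧
        -- (2) no (y'+1)-cap starts with a pair (j, b) with f(j,b) ≤ f(i,j)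
        (¬ ∃ q, IsCap m f (y' + 1) q ∧ q 0 = j ∧ f j (q 1) ≤ f i j) ∧
        -- (3) some (x'+1)-cup starts with a pair (i, a) with f(i,a) ≥ f(i,j)
        (∃ q, IsCup m f (x' + 1) q ∧ q 0 = i ∧ f i j ≤ f i (q 1)) ∧
        -- (4) some (y'+1)-cap starts with a pair (i, b) with f(i,b) ≤ f(i,j)
        (∃ q, IsCap m f (y' + 1) q ∧ q 0 = i ∧ f i (q 1) ≤ f i j) := by
  intro i j hi hij hj
  obtain ⟨x', hx', no_cup_j, cup_i⟩ := exists_cup_threshold hk hf.1 hi hij hj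
  obtain ⟨y', hy', no_cap_j, cap_i⟩ := exists_cap_threshold hl hf.2 hi hij hj
  exact ⟨x', hx', y', hy', no_cup_j, no_cap_j, cup_i, cap_i⟩

/-- Lemma 2 (second, symmetric part): for a `(k+2, l+2)`-free `f` and indices
`i < j`, there are `x' ∈ [k]`, `y' ∈ [l]` with `γ^j(x') < f(i,j) < δ^j(y')` and
`γ^i(x') ≥ f(i,j) ≥ δ^i(y')`. -/
theorem gamma_delta_lemma (k l m : ℕ) (hk : 1 ≤ k) (hl : 1 ≤ l) (hm : 1 ≤ m)
    (f : ℕ → ℕ → ℝ) (hf : IsFree m f (k + 2) (l + 2)) :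
    ∀ i j : ℕ, 1 ≤ i → i < j → j ≤ m →
      ∃ x' ∈ Finset.Icc 1 k, ∃ y' ∈ Finset.Icc 1 l,
        -- (1) no (x'+1)-cup starts with a pair (j, a) with f(j,a) ≥ f(i,j)
        (¬ ∃ q, IsCup m f (x' + 1) q ∧ q 0 = j ∧ f i j ≤ f j (q 1)) ∧
        -- (2) no (y'+1)-cap starts with a pair (j, b) with f(j,b) ≤ f(i,j)
        (¬ ∃ q, IsCap m f (y' + 1) q ∧ q 0 = j ∧ f j (q 1) ≤ f i j) ∧
        -- (3) some (x'+1)-cup starts with a pair (i, a) with f(i,a) ≥ f(i,j)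
        (∃ q, IsCup m f (x' + 1) q ∧ q 0 = i ∧ f i j ≤ f i (q 1)) ∧
        -- (4) some (y'+1)-cap starts with a pair (i, b) with f(i,b) ≤ f(i,j)
        (∃ q, IsCap m f (y' + 1) q ∧ q 0 = i ∧ f i (q 1) ≤ f i j) :=
  gamma_delta_lemma_general k l m hk hl f hf
end

section
/- Let n ≥ 6 and let P be a finite set of points in the plane in general position with pairwise distinct x-coordinates, such that P contains no n points in convex position, no n-cup, and no (n−1)-cap. Let Q' ⊆ P be the set of points q' for which there exists a point q ∈ P together with an (n−2)-cup ending at q, an (n−2)-cap (q, u₂,…,u_{n−2}) starting at q, and an (n−1)-cup (q, w₂,…,w_{n−1}) starting at q, such that q' = u₂ = w_{n−1}. Then (n−2)·|Q'| ≤ |P|. -/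
/-- A finite set of points in the plane is in general position if no three of
its points are collinear. -/
def GeneralPosition (P : Finset (ℝ × ℝ)) : Prop :=
  ∀ p ∈ P, ∀ q ∈ P, ∀ r ∈ P, p ≠ q → p ≠ r → q ≠ r →
    ¬ Collinear ℝ ({p, q, r} : Set (ℝ × ℝ))

/-- A finite set of points is in convex position if no point of the set lies in
the convex hull of the other points. -/
def ConvexPosition (S : Finset (ℝ × ℝ)) : Prop :=
  ∀ p ∈ S, p ∉ convexHull ℝ ((S : Set (ℝ × ℝ)) \ {p})

/-- The ptSlope of the line through two points (with distinct x-coordinates). -/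
noncomputable def ptSlope (p q : ℝ × ℝ) : ℝ := (q.2 - p.2) / (q.1 - p.1)

/-- The points of `P` have pairwise distinct x-coordinates. -/
def DistinctX (P : Finset (ℝ × ℝ)) : Prop :=
  ∀ p ∈ P, ∀ q ∈ P, p ≠ q → p.1 ≠ q.1

/-- A `t`-cup in `P`: a sequence `q 0, …, q (t-1)` of points of `P` with strictly
increasing x-coordinates and non-decreasing slopes of consecutive segments. -/
def IsGCup (P : Finset (ℝ × ℝ)) (t : ℕ) (q : ℕ → ℝ × ℝ) : Prop :=
  (∀ i, i < t → q i ∈ P) ∧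
  (∀ i, i + 1 < t → (q i).1 < (q (i + 1)).1) ∧
  (∀ i, i + 2 < t → ptSlope (q i) (q (i + 1)) ≤ ptSlope (q (i + 1)) (q (i + 2)))

/-- A `t`-cap in `P`: a sequence of points of `P` with strictly increasing
x-coordinates and non-increasing slopes of consecutive segments. -/
def IsGCap (P : Finset (ℝ × ℝ)) (t : ℕ) (q : ℕ → ℝ × ℝ) : Prop :=
  (∀ i, i < t → q i ∈ P) ∧
  (∀ i, i + 1 < t → (q i).1 < (q (i + 1)).1) ∧
  (∀ i, i + 2 < t → ptSlope (q (i + 1)) (q (i + 2)) ≤ ptSlope (q i) (q (i + 1)))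

/-!
A mate `r`, together with its point `q`, owns the `n - 2` points `w₂, …, w_{n-1} = r` of its
`(n-1)`-cup, all in the vertical strip `q.1 < x ≤ r.1`; it suffices that these strips are pairwise
disjoint. Suppose `r₁` lies left of `r₂` but right of `q₂`. The segment `r₁r₂` is less steep than
`q₁r₁`, since otherwise the `(n-2)`-cup ending at `q₁` would continue through `r₁` and `r₂` to an
`n`-cup. Then either `q₁, r₁` followed by the cap `r₂, u₃, …` of `r₂` is an `(n-1)`-cap, or `r₁`
lies above the chord `q₂r₂` of the `(n-1)`-cup of `r₂` and forms with it `n` points in convex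
position.
-/

open Finset

section ptSlope

variable {p q r : ℝ × ℝ}

lemma ptSlope_mul_sub (h : p.1 ≠ q.1) : ptSlope p q * (q.1 - p.1) = q.2 - p.2 :=
  div_mul_cancel₀ _ (sub_ne_zero.2 h.symm)

lemma sub_mul_ptSlope_eq_add (h₁ : p.1 < q.1) (h₂ : q.1 < r.1) :
    (r.1 - p.1) * ptSlope p r = (q.1 - p.1) * ptSlope p q + (r.1 - q.1) * ptSlope q r := by
  rw [mul_comm, ptSlope_mul_sub (h₁.trans h₂).ne, mul_comm, ptSlope_mul_sub h₁.ne, mul_comm,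
    ptSlope_mul_sub h₂.ne]
  ring

lemma ptSlope_le_ptSlope_left_iff (h₁ : p.1 < q.1) (h₂ : q.1 < r.1) :
    ptSlope p q ≤ ptSlope p r ↔ ptSlope p q ≤ ptSlope q r := by
  have e := sub_mul_ptSlope_eq_add h₁ h₂
  constructor <;> intro h <;> nlinarith [sub_pos.2 h₁, sub_pos.2 h₂]

lemma ptSlope_le_ptSlope_right_iff (h₁ : p.1 < q.1) (h₂ : q.1 < r.1) :
    ptSlope p r ≤ ptSlope q r ↔ ptSlope p q ≤ ptSlope q r := by
  have e := sub_mul_ptSlope_eq_add h₁ h₂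
  constructor <;> intro h <;> nlinarith [sub_pos.2 h₁, sub_pos.2 h₂]

variable {μ : ℝ}

lemma ptSlope_le_iff (h : p.1 < q.1) : ptSlope p q ≤ μ ↔ μ * p.1 - p.2 ≤ μ * q.1 - q.2 := by
  rw [ptSlope, div_le_iff₀ (sub_pos.2 h)]
  constructor <;> intro <;> linarith

lemma ptSlope_lt_iff (h : p.1 < q.1) : ptSlope p q < μ ↔ μ * p.1 - p.2 < μ * q.1 - q.2 := by
  rw [ptSlope, div_lt_iff₀ (sub_pos.2 h)]
  constructor <;> intro <;> linarith

lemma lt_ptSlope_iff (h : p.1 < q.1) : μ < ptSlope p q ↔ μ * q.1 - q.2 < μ * p.1 - p.2 := by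
  rw [ptSlope, lt_div_iff₀ (sub_pos.2 h)]
  constructor <;> intro <;> linarith

lemma sub_lt_of_ptSlope_lt {z : ℝ × ℝ} {c : ℝ} (hp : p.1 < z.1) (hr : z.1 < r.1)
    (hz : ptSlope p r < ptSlope p z) (hpc : μ * p.1 - p.2 < c) (hrc : μ * r.1 - r.2 < c) :
    μ * z.1 - z.2 < c := by
  have ez := ptSlope_mul_sub hp.ne
  have er := ptSlope_mul_sub (hp.trans hr).ne
  nlinarith [mul_lt_mul_of_pos_left hz (sub_pos.2 hp), mul_lt_mul_of_pos_left hpc (sub_pos.2 hr),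
    mul_lt_mul_of_pos_left hrc (sub_pos.2 hp), sub_pos.2 hr, sub_pos.2 hp]

lemma collinear_of_ptSlope_eq (h₁ : p.1 < q.1) (h₂ : q.1 < r.1) (h : ptSlope p q = ptSlope q r) :
    Collinear ℝ ({p, q, r} : Set (ℝ × ℝ)) := by
  apply collinear_insert_of_mem_affineSpan_pair
  convert AffineMap.lineMap_mem_affineSpan_pair ((p.1 - q.1) / (r.1 - q.1)) q r using 1
  have hpq := ptSlope_mul_sub h₁.ne
  have hqr := ptSlope_mul_sub h₂.ne
  have hr : r.1 - q.1 ≠ 0 := (sub_pos.2 h₂).ne'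
  ext <;> simp only [AffineMap.lineMap_apply_module', Prod.fst_add, Prod.snd_add, Prod.smul_fst,
    Prod.smul_snd, Prod.fst_sub, Prod.snd_sub, smul_eq_mul] <;> field_simp
  · ring
  · rw [h] at hpq
    linear_combination (r.1 - q.1) * hpq - (q.1 - p.1) * hqr

end ptSlope

lemma convexPosition_of_forall_exists_linearMap {S : Finset (ℝ × ℝ)}
    (h : ∀ p ∈ S, ∃ ℓ : ℝ × ℝ →ₗ[ℝ] ℝ, ∀ w ∈ S, w ≠ p → ℓ w < ℓ p) : ConvexPosition S := by
  intro p hp hmem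
  obtain ⟨ℓ, hℓ⟩ := h p hp
  have : ℓ p < ℓ p :=
    convexHull_min (fun w hw => hℓ w hw.1 hw.2) (convex_halfSpace_lt ℓ.isLinear (ℓ p)) hmem
  exact lt_irrefl _ this

namespace IsGCup

variable {P : Finset (ℝ × ℝ)} {t m : ℕ} {W : ℕ → ℝ × ℝ} {z : ℝ × ℝ}

lemma fst_lt (hW : IsGCup P t W) {i j : ℕ} (hij : i < j) (hj : j < t) : (W i).1 < (W j).1 :=
  strictMonoOn_Iic_of_lt_succ (ψ := fun i => (W i).1) (n := t - 1)
    (fun k hk => hW.2.1 k (by omega)) (Set.mem_Iic.2 (by omega)) (Set.mem_Iic.2 (by omega)) hij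

lemma injOn (hW : IsGCup P t W) : Set.InjOn W (Set.Iio t) := by
  intro i hi j hj h
  by_contra hne
  rcases Nat.lt_or_gt_of_ne hne with hij | hji
  · exact (hW.fst_lt hij hj).ne (congrArg Prod.fst h)
  · exact (hW.fst_lt hji hi).ne (congrArg Prod.fst h).symm

lemma ptSlope_mem_Icc (hW : IsGCup P t W) {i j : ℕ} (hij : i ≤ j) (hj : j + 1 < t) :
    ptSlope (W i) (W (j + 1)) ∈
      Set.Icc (ptSlope (W i) (W (i + 1))) (ptSlope (W j) (W (j + 1))) := by
  induction j, hij using Nat.le_induction with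
  | base => exact ⟨le_rfl, le_rfl⟩
  | succ j hij ih =>
    obtain ⟨h₁, h₂⟩ := ih (by omega)
    have hx₁ := hW.fst_lt (show i < j + 1 by omega) (by omega)
    have hx₂ := hW.fst_lt (show j + 1 < j + 1 + 1 by omega) hj
    have hle := h₂.trans (hW.2.2 j (by omega))
    exact ⟨h₁.trans ((ptSlope_le_ptSlope_left_iff hx₁ hx₂).2 hle),
      (ptSlope_le_ptSlope_right_iff hx₁ hx₂).2 hle⟩

lemma ptSlope_le_ptSlope (hW : IsGCup P t W) {i j k : ℕ} (hij : i < j) (hjk : j < k)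
    (hk : k < t) : ptSlope (W i) (W j) ≤ ptSlope (W j) (W k) := by
  obtain ⟨j, rfl⟩ : ∃ j', j = j' + 1 := ⟨j - 1, by omega⟩
  obtain ⟨k, rfl⟩ : ∃ k', k = k' + 1 := ⟨k - 1, by omega⟩
  calc ptSlope (W i) (W (j + 1)) ≤ ptSlope (W j) (W (j + 1)) :=
        (hW.ptSlope_mem_Icc (by omega) (by omega)).2
    _ ≤ ptSlope (W (j + 1)) (W (j + 2)) := hW.2.2 j (by omega)
    _ ≤ ptSlope (W (j + 1)) (W (k + 1)) := (hW.ptSlope_mem_Icc (by omega) hk).1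

lemma ptSlope_lt_ptSlope_succ (hgp : GeneralPosition P) (hW : IsGCup P t W) {i : ℕ}
    (hi : i + 2 < t) : ptSlope (W i) (W (i + 1)) < ptSlope (W (i + 1)) (W (i + 2)) := by
  have hx₁ := hW.fst_lt (show i < i + 1 by omega) (by omega)
  have hx₂ := hW.fst_lt (show i + 1 < i + 2 by omega) hi
  refine (hW.2.2 i hi).lt_of_ne fun h => hgp _ (hW.1 i (by omega)) _ (hW.1 (i + 1) (by omega)) _
    (hW.1 (i + 2) hi) (fun e => hx₁.ne (congrArg Prod.fst e))
    (fun e => (hx₁.trans hx₂).ne (congrArg Prod.fst e)) (fun e => hx₂.ne (congrArg Prod.fst e))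
    (collinear_of_ptSlope_eq hx₁ hx₂ h)

lemma exists_forall_sub_lt (hgp : GeneralPosition P) (hW : IsGCup P t W) {j : ℕ} (hj₀ : 0 < j)
    (hj : j + 1 < t) :
    ∃ μ : ℝ, ∀ i < t, i ≠ j → μ * (W i).1 - (W i).2 < μ * (W j).1 - (W j).2 := by
  obtain ⟨j, rfl⟩ : ∃ j', j = j' + 1 := ⟨j - 1, by omega⟩
  have hlt := hW.ptSlope_lt_ptSlope_succ hgp hj
  refine ⟨(ptSlope (W j) (W (j + 1)) + ptSlope (W (j + 1)) (W (j + 2))) / 2, fun i hi hij => ?_⟩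
  rcases Nat.lt_or_gt_of_ne hij with h | h
  · have := (hW.ptSlope_mem_Icc (i := i) (j := j) (by omega) (by omega)).2
    exact (ptSlope_lt_iff (hW.fst_lt h (by omega))).1 (by linarith)
  · obtain ⟨i, rfl⟩ : ∃ i', i = i' + 1 := ⟨i - 1, by omega⟩
    have := (hW.ptSlope_mem_Icc (i := j + 1) (j := i) (by omega) hi).1
    exact (lt_ptSlope_iff (hW.fst_lt h hi)).1 (by linarith)

lemma ptSlope_le_ptSlope_chord (hW : IsGCup P (m + 2) W) {i : ℕ} (hi₀ : 0 < i) (hi : i < m + 2) :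
    ptSlope (W 0) (W i) ≤ ptSlope (W 0) (W (m + 1)) := by
  rcases Nat.lt_or_ge i (m + 1) with h | h
  · exact (ptSlope_le_ptSlope_left_iff (hW.fst_lt hi₀ hi) (hW.fst_lt h (by omega))).2
      (hW.ptSlope_le_ptSlope hi₀ h (by omega))
  · rw [show i = m + 1 by omega]

lemma le_card_filter (hW : IsGCup P (m + 1) W) :
    m ≤ #{p ∈ P | (W 0).1 < p.1 ∧ p.1 ≤ (W m).1} := by
  have hinj : Set.InjOn W (Ioc 0 m) :=
    hW.injOn.mono fun i hi => Set.mem_Iio.2 (by simp at hi; omega)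
  calc m = #((Ioc 0 m).image W) := by rw [card_image_of_injOn hinj, Nat.card_Ioc, Nat.sub_zero]
    _ ≤ _ := by
      refine card_le_card fun w hw => ?_
      obtain ⟨i, hi, rfl⟩ := mem_image.1 hw
      rw [mem_Ioc] at hi
      refine mem_filter.2 ⟨hW.1 i (by omega), hW.fst_lt hi.1 (by omega), ?_⟩
      rcases hi.2.lt_or_eq with h | rfl
      · exact (hW.fst_lt h (by omega)).le
      · exact le_rfl

lemma exists_linearMap_lt (hgp : GeneralPosition P) (hW : IsGCup P (m + 2) W)
    (hz₀ : (W 0).1 < z.1) (hz₁ : z.1 < (W (m + 1)).1)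
    (hz : ptSlope (W 0) (W (m + 1)) < ptSlope (W 0) z) {j : ℕ} (hj : j < m + 2) :
    ∃ ℓ : ℝ × ℝ →ₗ[ℝ] ℝ, ℓ z < ℓ (W j) ∧ ∀ i < m + 2, i ≠ j → ℓ (W i) < ℓ (W j) := by
  rcases Nat.eq_zero_or_pos j with rfl | hj₀
  · refine ⟨-LinearMap.fst ℝ ℝ ℝ, by simpa using hz₀, fun i hi hi₀ => ?_⟩
    simpa using hW.fst_lt (Nat.pos_of_ne_zero hi₀) hi
  rcases Nat.lt_or_ge j (m + 1) with hjm | hjm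
  · obtain ⟨μ, hμ⟩ := hW.exists_forall_sub_lt hgp hj₀ (by omega)
    refine ⟨μ • LinearMap.fst ℝ ℝ ℝ - LinearMap.snd ℝ ℝ ℝ, ?_,
      fun i hi hij => by simpa using hμ i hi hij⟩
    simpa using sub_lt_of_ptSlope_lt hz₀ hz₁ hz (hμ 0 (by omega) (by omega))
      (hμ (m + 1) (by omega) (by omega))
  · obtain rfl : j = m + 1 := by omega
    refine ⟨LinearMap.fst ℝ ℝ ℝ, by simpa using hz₁, fun i hi hij => ?_⟩
    simpa using hW.fst_lt (show i < m + 1 by omega) (by omega)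

lemma exists_convexPosition_insert (hgp : GeneralPosition P) (hW : IsGCup P (m + 2) W) (hzP : z ∈ P)
    (hz₀ : (W 0).1 < z.1) (hz₁ : z.1 < (W (m + 1)).1)
    (hz : ptSlope (W 0) (W (m + 1)) < ptSlope (W 0) z) :
    ∃ S ⊆ P, #S = m + 3 ∧ ConvexPosition S := by
  classical
  set μ := ptSlope (W 0) (W (m + 1))
  have hchord : ∀ i < m + 2, μ * (W 0).1 - (W 0).2 ≤ μ * (W i).1 - (W i).2 := by
    intro i hi
    rcases Nat.eq_zero_or_pos i with rfl | hi₀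
    · exact le_rfl
    · exact (ptSlope_le_iff (hW.fst_lt hi₀ hi)).1 (hW.ptSlope_le_ptSlope_chord hi₀ hi)
  have hzchord := (lt_ptSlope_iff hz₀).1 hz
  have hzW : z ∉ (range (m + 2)).image W := by
    simp only [mem_image, mem_range, not_exists, not_and]
    rintro i hi rfl
    linarith [hchord i hi]
  refine ⟨insert z ((range (m + 2)).image W), ?_, ?_, ?_⟩
  · exact insert_subset hzP (image_subset_iff.2 fun i hi => hW.1 i (mem_range.1 hi))
  · rw [card_insert_of_notMem hzW, card_image_of_injOn (by simpa using hW.injOn), card_range]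
  refine convexPosition_of_forall_exists_linearMap fun p hp => ?_
  rcases mem_insert.1 hp with rfl | hp
  · refine ⟨LinearMap.snd ℝ ℝ ℝ - μ • LinearMap.fst ℝ ℝ ℝ, fun w hw hwp => ?_⟩
    obtain ⟨i, hi, rfl⟩ := mem_image.1 ((mem_insert.1 hw).resolve_left hwp)
    simp only [LinearMap.sub_apply, LinearMap.snd_apply, LinearMap.smul_apply, LinearMap.fst_apply,
      smul_eq_mul]
    linarith [hchord i (mem_range.1 hi)]
  · obtain ⟨j, hj, rfl⟩ := mem_image.1 hp
    obtain ⟨ℓ, hℓz, hℓW⟩ := hW.exists_linearMap_lt hgp hz₀ hz₁ hz (mem_range.1 hj)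
    refine ⟨ℓ, fun w hw hwp => ?_⟩
    rcases mem_insert.1 hw with rfl | hw
    · exact hℓz
    · obtain ⟨i, hi, rfl⟩ := mem_image.1 hw
      exact hℓW i (mem_range.1 hi) (fun h => hwp (h ▸ rfl))

end IsGCup

section gluing

variable {P : Finset (ℝ × ℝ)} {m : ℕ} {z : ℝ × ℝ}

lemma IsGCup.snoc {V : ℕ → ℝ × ℝ} (hV : IsGCup P (m + 2) V) (hz : z ∈ P)
    (hx : (V (m + 1)).1 < z.1) (hs : ptSlope (V m) (V (m + 1)) ≤ ptSlope (V (m + 1)) z) :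
    IsGCup P (m + 3) (Function.update V (m + 2) z) := by
  refine ⟨fun i hi => ?_, fun i hi => ?_, fun i hi => ?_⟩
  · rcases Nat.lt_or_ge i (m + 2) with h | h
    · rw [Function.update_of_ne (by omega)]
      exact hV.1 i h
    · rw [show i = m + 2 by omega, Function.update_self]
      exact hz
  · rcases Nat.lt_or_ge (i + 1) (m + 2) with h | h
    · rw [Function.update_of_ne (by omega), Function.update_of_ne (by omega)]
      exact hV.2.1 i h
    · rw [show i = m + 1 by omega, Function.update_of_ne (by omega), Function.update_self]
      exact hx
  · rcases Nat.lt_or_ge (i + 2) (m + 2) with h | h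
    · rw [Function.update_of_ne (by omega), Function.update_of_ne (by omega),
        Function.update_of_ne (by omega)]
      exact hV.2.2 i h
    · rw [show i = m by omega, Function.update_of_ne (by omega), Function.update_of_ne (by omega),
        Function.update_self]
      exact hs

lemma IsGCap.cons {U : ℕ → ℝ × ℝ} (hU : IsGCap P (m + 2) U) (hz : z ∈ P)
    (hx : z.1 < (U 0).1) (hs : ptSlope (U 0) (U 1) ≤ ptSlope z (U 0)) :
    IsGCap P (m + 3) (fun | 0 => z | i + 1 => U i) := by
  refine ⟨fun i hi => ?_, fun i hi => ?_, fun i hi => ?_⟩ <;> rcases i with _ | i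
  · exact hz
  · exact hU.1 i (by omega)
  · exact hx
  · exact hU.2.1 i (by omega)
  · exact hs
  · exact hU.2.2 i (by omega)

lemma IsGCap.tail {U : ℕ → ℝ × ℝ} (hU : IsGCap P (m + 1) U) : IsGCap P m (fun i => U (i + 1)) :=
  ⟨fun i hi => hU.1 _ (by omega), fun i hi => hU.2.1 _ (by omega), fun i hi => hU.2.2 _ (by omega)⟩

end gluing

section mates

variable {P : Finset (ℝ × ℝ)} {a b m : ℕ}

/-- Otherwise `V` followed by `r` and `z` is an `(a + 4)`-cup: the cup condition at `q` holds since
the penultimate point of `V` followed by `U` would otherwise be a `(b + 3)`-cap. -/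
lemma ptSlope_lt_of_cup_of_cap (hcup : ¬ ∃ c, IsGCup P (a + 4) c)
    (hcap : ¬ ∃ c, IsGCap P (b + 3) c) {q r : ℝ × ℝ} {V U : ℕ → ℝ × ℝ}
    (hV : IsGCup P (a + 2) V) (hVq : V (a + 1) = q) (hU : IsGCap P (b + 2) U) (hUq : U 0 = q)
    (hUr : U 1 = r) {z : ℝ × ℝ} (hz : z ∈ P) (hrz : r.1 < z.1) : ptSlope r z < ptSlope q r := by
  subst hUq hUr
  have hqr : (U 0).1 < (U 1).1 := hU.2.1 0 (by omega)
  have hVU : ptSlope (V a) (U 0) ≤ ptSlope (U 0) (U 1) := by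
    by_contra! h
    refine hcap ⟨_, hU.cons (hV.1 a (by omega)) ?_ h.le⟩
    simpa [hVq] using hV.2.1 a (by omega)
  by_contra! h
  refine hcup ⟨_, ((hV.snoc (hU.1 1 (by omega)) (hVq ▸ hqr) (hVq ▸ hVU)).snoc hz ?_ ?_)⟩
  · simpa using hrz
  · simpa [hVq] using h

lemma fst_le_of_cap_of_cup (hgp : GeneralPosition P)
    (hconv : ¬ ∃ S ⊆ P, #S = m + 3 ∧ ConvexPosition S) (hcap : ¬ ∃ c, IsGCap P (b + 4) c)
    {q₁ r₁ q₂ r₂ : ℝ × ℝ} {U W : ℕ → ℝ × ℝ} (hq₁ : q₁ ∈ P) (hr₁ : r₁ ∈ P) (hqr₁ : q₁.1 < r₁.1)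
    (hsteep : ∀ z ∈ P, r₁.1 < z.1 → ptSlope r₁ z < ptSlope q₁ r₁)
    (hU : IsGCap P (b + 3) U) (hUq : U 0 = q₂) (hUr : U 1 = r₂)
    (hW : IsGCup P (m + 2) W) (hWq : W 0 = q₂) (hWr : W (m + 1) = r₂) (hr : r₁.1 < r₂.1) :
    r₁.1 ≤ q₂.1 := by
  by_contra! hq
  subst hWq hWr
  have hs : ptSlope r₁ (W (m + 1)) < ptSlope q₁ r₁ := hsteep _ (hW.1 _ (by omega)) hr
  have hsteeper : ptSlope r₁ (W (m + 1)) < ptSlope (W (m + 1)) (U 2) := by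
    by_contra! h
    refine hcap ⟨_, (hU.tail.cons hr₁ (by simpa [hUr] using hr) ?_).cons hq₁ hqr₁ ?_⟩
    · simpa [hUr] using h
    · simpa [hUr] using hs.le
  have hU₀ : ptSlope (U 1) (U 2) ≤ ptSlope (U 0) (U 1) := hU.2.2 0 (by omega)
  rw [hUq, hUr] at hU₀
  rcases le_or_gt (ptSlope (W 0) r₁) (ptSlope (W 0) (W (m + 1))) with hbelow | habove
  · have := (ptSlope_le_ptSlope_right_iff hq hr).2 ((ptSlope_le_ptSlope_left_iff hq hr).1 hbelow)
    linarith
  · exact hconv (hW.exists_convexPosition_insert hgp hr₁ hq hr habove)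

end mates

lemma card_mul_le_card_of_pairwise_strips {α β : Type*} [LinearOrder β] {P Q : Finset α} {c : ℕ}
    (f a : α → β) (hf : Set.InjOn f Q) (hc : ∀ r ∈ Q, c ≤ #{p ∈ P | a r < f p ∧ f p ≤ f r})
    (hsep : ∀ r₁ ∈ Q, ∀ r₂ ∈ Q, f r₁ < f r₂ → f r₁ ≤ a r₂) : c * #Q ≤ #P := by
  classical
  set strip := fun r => {p ∈ P | a r < f p ∧ f p ≤ f r}
  have hdisj : (Q : Set α).PairwiseDisjoint strip := by
    intro r₁ h₁ r₂ h₂ hne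
    wlog h : f r₁ < f r₂ generalizing r₁ r₂
    · exact (this h₂ h₁ hne.symm ((hf.ne h₁ h₂ hne).lt_or_gt.resolve_left h)).symm
    exact disjoint_filter.2 fun p _ hp₁ hp₂ => (hp₁.2.trans (hsep r₁ h₁ r₂ h₂ h)).not_gt hp₂.1
  calc c * #Q = ∑ r ∈ Q, c := by rw [sum_const, smul_eq_mul, mul_comm]
    _ ≤ ∑ r ∈ Q, #(strip r) := sum_le_sum hc
    _ = #(Q.biUnion strip) := (card_biUnion hdisj).symm
    _ ≤ #P := card_le_card (biUnion_subset.2 fun r _ => filter_subset _ _)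

/-- Claim 2: the set `Q'` of mates satisfies `(n-2)·|Q'| ≤ |P|`. -/
theorem mates_sparse (n : ℕ) (hn : 6 ≤ n) (P : Finset (ℝ × ℝ))
    (hgp : GeneralPosition P) (hx : DistinctX P)
    (hconv : ¬ ∃ S ⊆ P, S.card = n ∧ ConvexPosition S)
    (hcup : ¬ ∃ c, IsGCup P n c) (hcap : ¬ ∃ c, IsGCap P (n - 1) c)
    (Q' : Finset (ℝ × ℝ))
    (hQ' : ∀ q' : ℝ × ℝ, q' ∈ Q' ↔ q' ∈ P ∧
      ∃ (q : ℝ × ℝ) (V U W : ℕ → ℝ × ℝ),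
        IsGCup P (n - 2) V ∧ V (n - 3) = q ∧
        IsGCap P (n - 2) U ∧ U 0 = q ∧
        IsGCup P (n - 1) W ∧ W 0 = q ∧
        q' = U 1 ∧ q' = W (n - 2)) :
    (n - 2) * Q'.card ≤ P.card := by
  obtain ⟨k, rfl⟩ : ∃ k, n = k + 6 := ⟨n - 6, by omega⟩
  simp only [show k + 6 - 2 = k + 4 by omega, show k + 6 - 3 = k + 3 by omega,
    show k + 6 - 1 = k + 5 by omega] at hQ' hcap ⊢
  have hQP : ∀ r ∈ Q', r ∈ P := fun r hr => ((hQ' r).1 hr).1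
  choose! q V U W hV hVq hU hUq hW hWq hUr hWr using fun r hr => ((hQ' r).1 hr).2
  refine card_mul_le_card_of_pairwise_strips Prod.fst (fun r => (q r).1)
    (fun r₁ h₁ r₂ h₂ h => by_contra fun hne => hx r₁ (hQP r₁ h₁) r₂ (hQP r₂ h₂) hne h)
    (fun r hr => ?_) (fun r₁ h₁ r₂ h₂ h => ?_)
  · simpa [hWq r hr, ← hWr r hr] using (hW r hr).le_card_filter
  · have hqr₁ := (hU r₁ h₁).2.1 0 (by omega)
    rw [zero_add, hUq r₁ h₁, ← hUr r₁ h₁] at hqr₁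
    exact fst_le_of_cap_of_cup hgp hconv hcap (hUq r₁ h₁ ▸ (hU r₁ h₁).1 0 (by omega))
      (hQP r₁ h₁) hqr₁
      (fun z hz hrz => ptSlope_lt_of_cup_of_cap hcup hcap (hV r₁ h₁) (hVq r₁ h₁) (hU r₁ h₁)
        (hUq r₁ h₁) (hUr r₁ h₁).symm hz hrz)
      (hU r₂ h₂) (hUq r₂ h₂) (hUr r₂ h₂).symm (hW r₂ h₂) (hWq r₂ h₂) (hWr r₂ h₂).symm h
end

section
/- Let k, l ≥ 1 and let P be a finite set of points in the plane in general position with pairwise distinct x-coordinates. If |P| > C(k+l, k), then P contains a (k+2)-cup or an (l+2)-cap, where C(a,b) denotes the binomial coefficient. -/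
/-!
Induction on `k + l` along Pascal's rule
`C(k+l+2, k+1) = C(k+l+1, k) + C(k+l+1, k+1)`. Let `E` be the set of right endpoints of
`(k+2)`-cups of `P`. Then `P \ E` has no `(k+2)`-cup, so if it has more than `C(k+l+1, k)`
points it contains an `(l+3)`-cap. Otherwise `E` has more than `C(k+l+1, k+1)` points, hence
contains a `(k+3)`-cup or an `(l+2)`-cap. The first point of such a cap ends a `(k+2)`-cup of `P`,
and comparing the two slopes meeting there, either the cup extends by the second point of the cap
or the cap extends by the second-to-last point of the cup.
-/

lemma IsGCup.mono {P Q : Finset (ℝ × ℝ)} (h : P ⊆ Q) {t : ℕ} {q : ℕ → ℝ × ℝ}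
    (hq : IsGCup P t q) : IsGCup Q t q :=
  ⟨fun i hi => h (hq.1 i hi), hq.2⟩

lemma IsGCap.mono {P Q : Finset (ℝ × ℝ)} (h : P ⊆ Q) {t : ℕ} {q : ℕ → ℝ × ℝ}
    (hq : IsGCap P t q) : IsGCap Q t q :=
  ⟨fun i hi => h (hq.1 i hi), hq.2⟩

lemma DistinctX.subset {P Q : Finset (ℝ × ℝ)} (h : P ⊆ Q) (hx : DistinctX Q) :
    DistinctX P := fun p hp q hq hpq => hx p (h hp) q (h hq) hpq

lemma DistinctX.exists_fst_lt {P : Finset (ℝ × ℝ)} (hx : DistinctX P) (h : 1 < P.card) :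
    ∃ p ∈ P, ∃ q ∈ P, p.1 < q.1 := by
  obtain ⟨a, ha, b, hb, hab⟩ := Finset.one_lt_card.mp h
  rcases (hx a ha b hb hab).lt_or_gt with hlt | hlt
  · exact ⟨a, ha, b, hb, hlt⟩
  · exact ⟨b, hb, a, ha, hlt⟩

lemma DistinctX.exists_isGCup_two {P : Finset (ℝ × ℝ)} (hx : DistinctX P) (h : 1 < P.card) :
    ∃ q, IsGCup P 2 q := by
  obtain ⟨p, hp, q, hq, hpq⟩ := hx.exists_fst_lt h
  refine ⟨fun i => if i = 0 then p else q, fun i _ => ?_, fun i hi => ?_, fun i hi => by omega⟩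
  · dsimp only; split <;> assumption
  · obtain rfl : i = 0 := by omega
    simpa using hpq

lemma DistinctX.exists_isGCap_two {P : Finset (ℝ × ℝ)} (hx : DistinctX P) (h : 1 < P.card) :
    ∃ q, IsGCap P 2 q := by
  obtain ⟨p, hp, q, hq, hpq⟩ := hx.exists_fst_lt h
  refine ⟨fun i => if i = 0 then p else q, fun i _ => ?_, fun i hi => ?_, fun i hi => by omega⟩
  · dsimp only; split <;> assumption
  · obtain rfl : i = 0 := by omega
    simpa using hpq

lemma IsGCup.extend {P : Finset (ℝ × ℝ)} {k : ℕ} {q : ℕ → ℝ × ℝ} {p : ℝ × ℝ}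
    (hq : IsGCup P (k + 2) q) (hp : p ∈ P) (hlt : (q (k + 1)).1 < p.1)
    (hs : ptSlope (q k) (q (k + 1)) ≤ ptSlope (q (k + 1)) p) :
    IsGCup P (k + 3) (Function.update q (k + 2) p) := by
  refine ⟨fun i hi => ?_, fun i hi => ?_, fun i hi => ?_⟩
  · rcases (Nat.lt_succ_iff.mp hi).lt_or_eq with hi | rfl
    · simpa [Function.update_of_ne hi.ne] using hq.1 i hi
    · simpa using hp
  · rcases (Nat.lt_succ_iff.mp hi).lt_or_eq with hi | hi
    · simpa [Function.update_of_ne hi.ne, Function.update_of_ne (show i ≠ k + 2 by omega)]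
        using hq.2.1 i hi
    · obtain rfl : i = k + 1 := by omega
      simpa using hlt
  · rcases (Nat.lt_succ_iff.mp hi).lt_or_eq with hi | hi
    · simpa [Function.update_of_ne hi.ne, Function.update_of_ne (show i + 1 ≠ k + 2 by omega),
        Function.update_of_ne (show i ≠ k + 2 by omega)] using hq.2.2 i hi
    · obtain rfl : i = k := by omega
      simpa using hs

lemma IsGCap.cons_s13 {P : Finset (ℝ × ℝ)} {l : ℕ} {c : ℕ → ℝ × ℝ} {p : ℝ × ℝ}
    (hc : IsGCap P (l + 2) c) (hp : p ∈ P) (hlt : p.1 < (c 0).1)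
    (hs : ptSlope (c 0) (c 1) ≤ ptSlope p (c 0)) :
    IsGCap P (l + 3) (fun | 0 => p | i + 1 => c i) := by
  refine ⟨fun i hi => ?_, fun i hi => ?_, fun i hi => ?_⟩
  · cases i with
    | zero => exact hp
    | succ i => exact hc.1 i (by omega)
  · cases i with
    | zero => exact hlt
    | succ i => exact hc.2.1 i (by omega)
  · cases i with
    | zero => exact hs
    | succ i => exact hc.2.2 i (by omega)

section

open scoped Classical

noncomputable def cupEnds (P : Finset (ℝ × ℝ)) (k : ℕ) : Finset (ℝ × ℝ) :=
  {p ∈ P | ∃ q, IsGCup P (k + 2) q ∧ q (k + 1) = p}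

lemma cupEnds_subset (P : Finset (ℝ × ℝ)) (k : ℕ) : cupEnds P k ⊆ P :=
  Finset.filter_subset _ _

lemma not_isGCup_sdiff_cupEnds (P : Finset (ℝ × ℝ)) (k : ℕ) (q : ℕ → ℝ × ℝ) :
    ¬ IsGCup (P \ cupEnds P k) (k + 2) q := by
  intro hq
  have hend := Finset.mem_sdiff.mp (hq.1 (k + 1) (by omega))
  exact hend.2 (Finset.mem_filter.mpr ⟨hend.1, q, hq.mono Finset.sdiff_subset, rfl⟩)

lemma IsGCap.extend_of_cupEnds {P : Finset (ℝ × ℝ)} {k l : ℕ} {c : ℕ → ℝ × ℝ}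
    (hc : IsGCap (cupEnds P k) (l + 2) c) :
    (∃ q, IsGCup P (k + 3) q) ∨ ∃ q, IsGCap P (l + 3) q := by
  obtain ⟨-, q, hq, hqc⟩ := Finset.mem_filter.mp (hc.1 0 (by omega))
  have hc' := hc.mono (cupEnds_subset P k)
  rcases le_total (ptSlope (q k) (c 0)) (ptSlope (c 0) (c 1)) with hs | hs
  · left
    refine ⟨_, hq.extend (hc'.1 1 (by omega)) ?_ ?_⟩
    · simpa [hqc] using hc.2.1 0 (by omega)
    · simpa [hqc] using hs
  · right
    refine ⟨_, hc'.cons_s13 (hq.1 k (by omega)) ?_ hs⟩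
    simpa [hqc] using hq.2.1 k (by omega)
end

theorem cups_caps_points_general (k l : ℕ)
    (P : Finset (ℝ × ℝ)) (hx : DistinctX P)
    (hcard : (k + l).choose k < P.card) :
    (∃ q, IsGCup P (k + 2) q) ∨ (∃ q, IsGCap P (l + 2) q) := by
  induction k generalizing l P with
  | zero => exact .inl (hx.exists_isGCup_two (by simpa using hcard))
  | succ k ihk =>
    induction l generalizing P with
    | zero => exact .inr (hx.exists_isGCap_two (by simpa using hcard))
    | succ l ihl =>
      have hpascal : (k + 1 + (l + 1)).choose (k + 1)
          = (k + (l + 1)).choose k + (k + 1 + l).choose (k + 1) := by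
        rw [show k + 1 + (l + 1) = k + l + 1 + 1 by omega, Nat.choose_succ_succ',
          show k + (l + 1) = k + l + 1 by omega, show k + 1 + l = k + l + 1 by omega]
      have hsplit := Finset.card_sdiff_add_card_eq_card (cupEnds_subset P k)
      by_cases hrest : (k + (l + 1)).choose k < (P \ cupEnds P k).card
      · rcases ihk (l + 1) _ (hx.subset Finset.sdiff_subset) hrest with ⟨q, hq⟩ | ⟨c, hc⟩
        · exact (not_isGCup_sdiff_cupEnds P k q hq).elim
        · exact .inr ⟨c, hc.mono Finset.sdiff_subset⟩
      · rcases ihl _ (hx.subset (cupEnds_subset P k)) (by omega) with ⟨q, hq⟩ | ⟨c, hc⟩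
        · exact .inl ⟨q, hq.mono (cupEnds_subset P k)⟩
        · exact hc.extend_of_cupEnds

/-- Erdős–Szekeres cup–cap theorem for point sets: if `|P| > C(k+l, k)` then `P`
contains a `(k+2)`-cup or an `(l+2)`-cap. -/
theorem cups_caps_points (k l : ℕ) (hk : 1 ≤ k) (hl : 1 ≤ l)
    (P : Finset (ℝ × ℝ)) (hgp : GeneralPosition P) (hx : DistinctX P)
    (hcard : (k + l).choose k < P.card) :
    (∃ q, IsGCup P (k + 2) q) ∨ (∃ q, IsGCap P (l + 2) q) :=
  cups_caps_points_general k l P hx hcard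
end
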